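/- arXiv:0907.3856 — 3 statements merged into one kernel-verified Lean document; each statement's English description precedes it below -/
import Mathlib

section
/- The function f(ζ) = (15/16) ∑_{k≥1} k/((k²-1/4)(k²-9/4)) · (-ζ)^k satisfies, on the open unit disk, the differential equation D²f + (1/2)·((1-ζ)/(1+ζ))·Df = (3/2)·f, where D = ζ·d/dζ. -/
/-!
Writing `f = ∑ aₖ ζᵏ` with bounded `aₖ` and `k aₖ`, termwise differentiation gives
`D f = ∑ k aₖ ζᵏ` and `D² f = ∑ k² aₖ ζᵏ` on the unit disk. After multiplication by `1 + ζ` the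
equation reads `(D² + D/2 - 3/2) f = -ζ (D² - D/2 - 3/2) f`, which on coefficients is the
first-order recurrence `(k + 1)(k - 3/2) aₖ = -k (k + 5/2) aₖ₊₁` together with `a₀ = 0`. Both
sides of the recurrence equal `(15/16) (-1)ᵏ k (k + 1) / ((k - 1/2)(k + 1/2)(k + 3/2))`.
-/

noncomputable def stmt1Coeff (k : ℕ) : ℂ :=
  (15 / 16) * (-1) ^ k * (k : ℂ) / (((k : ℂ) ^ 2 - 1 / 4) * ((k : ℂ) ^ 2 - 9 / 4))

noncomputable def stmt1f (ζ : ℂ) : ℂ := ∑' k : ℕ, stmt1Coeff k * ζ ^ k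

open Metric

theorem hasSum_mul_deriv_tsum_pow {a : ℕ → ℂ} {C : ℝ} (ha : ∀ k, ‖a k‖ ≤ C) {z : ℂ}
    (hz : ‖z‖ < 1) :
    HasSum (fun k => k * a k * z ^ k) (z * deriv (fun w => ∑' k, a k * w ^ k) z) := by
  obtain ⟨r, hzr, hr1⟩ := exists_between hz
  have hr0 : 0 ≤ r := (norm_nonneg z).trans hzr.le
  have hbound : ∀ k (w : ℂ), w ∈ ball 0 r → ‖a k * w ^ k‖ ≤ C * r ^ k := fun k w hw => by
    rw [norm_mul, norm_pow]
    exact mul_le_mul (ha k) (pow_le_pow_left₀ (norm_nonneg w) (mem_ball_zero_iff.mp hw).le k)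
      (by positivity) ((norm_nonneg _).trans (ha 0))
  have hderiv := Complex.hasSum_deriv_of_summable_norm
    ((summable_geometric_of_lt_one hr0 hr1).mul_left C)
    (fun k => ((differentiable_pow k).const_mul (a k)).differentiableOn) isOpen_ball hbound
    (mem_ball_zero_iff.mpr hzr)
  refine (hderiv.mul_left z).congr_fun fun k => ?_
  rcases k with _ | k
  · simp
  · simp only [deriv_const_mul_field', deriv_pow_field, Nat.add_sub_cancel]
    push_cast
    ring

theorem hasSum_mul_deriv_mul_deriv_tsum_pow {a : ℕ → ℂ} {C : ℝ} (ha : ∀ k, ‖a k‖ ≤ C)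
    (hka : ∀ k : ℕ, ‖k * a k‖ ≤ C) {z : ℂ} (hz : ‖z‖ < 1) :
    HasSum (fun k => k ^ 2 * a k * z ^ k)
      (z * deriv (fun w => w * deriv (fun w => ∑' k, a k * w ^ k) w) z) := by
  have hD : (fun w => w * deriv (fun w => ∑' k, a k * w ^ k) w) =ᶠ[nhds z]
      fun w => ∑' k, (k * a k) * w ^ k := by
    filter_upwards [isOpen_ball.mem_nhds (mem_ball_zero_iff.mpr hz)] with w hw
    exact (hasSum_mul_deriv_tsum_pow ha (mem_ball_zero_iff.mp hw)).tsum_eq.symm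
  rw [hD.deriv_eq]
  refine (hasSum_mul_deriv_tsum_pow hka hz).congr_fun fun k => ?_
  ring

theorem HasSum.mul_eq_neg_of_recurrence {a P Q : ℕ → ℂ} {z S T : ℂ}
    (hP : HasSum (fun k => P k * a k * z ^ k) S) (hQ : HasSum (fun k => Q k * a k * z ^ k) T)
    (h0 : P 0 * a 0 = 0) (hrec : ∀ k, Q k * a k = -(P (k + 1) * a (k + 1))) :
    z * T = -S := by
  have hshift : HasSum (fun k => P (k + 1) * a (k + 1) * z ^ (k + 1)) S := by
    simpa [h0] using (hasSum_nat_add_iff' 1).mpr hP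
  refine (hQ.mul_left z).unique (hshift.neg.congr_fun fun k => ?_)
  rw [pow_succ, ← neg_mul, ← hrec]
  ring

theorem natCast_sq_sub_odd_div_four_ne_zero (k m : ℕ) : (k : ℂ) ^ 2 - (2 * m + 1) / 4 ≠ 0 := by
  intro h
  have h' : ((4 * k ^ 2 : ℕ) : ℂ) = ((2 * m + 1 : ℕ) : ℂ) := by
    push_cast; linear_combination 4 * h
  have := Nat.cast_injective h'
  generalize k ^ 2 = n at this
  omega

theorem stmt1Coeff_zero : stmt1Coeff 0 = 0 := by
  simp [stmt1Coeff]

theorem stmt1Coeff_succ_recurrence (k : ℕ) :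
    ((k : ℂ) ^ 2 - k / 2 - 3 / 2) * stmt1Coeff k
      = -((((k + 1 : ℕ) : ℂ) ^ 2 + (k + 1 : ℕ) / 2 - 3 / 2) * stmt1Coeff (k + 1)) := by
  have h1 := natCast_sq_sub_odd_div_four_ne_zero k 0
  have h9 := natCast_sq_sub_odd_div_four_ne_zero k 4
  have h1' := natCast_sq_sub_odd_div_four_ne_zero (k + 1) 0
  have h9' := natCast_sq_sub_odd_div_four_ne_zero (k + 1) 4
  norm_num at h1 h9 h1' h9'
  unfold stmt1Coeff
  push_cast
  rw [mul_div_assoc', mul_div_assoc', neg_div',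
    div_eq_div_iff (mul_ne_zero h1 h9) (mul_ne_zero h1' h9')]
  ring

theorem norm_natCast_mul_stmt1Coeff_le (k : ℕ) : ‖(k : ℂ) * stmt1Coeff k‖ ≤ 1 := by
  rcases k with _ | _ | k
  · simp [stmt1Coeff]
  · norm_num [stmt1Coeff]
  · have hk : (2 : ℝ) ≤ (k + 2 : ℕ) := by push_cast; linarith [k.cast_nonneg (α := ℝ)]
    have hx : ((k + 2 : ℕ) : ℂ) * stmt1Coeff (k + 2) = (-1) ^ (k + 2) *
        ((15 / 16 * ((k + 2 : ℕ) : ℝ) ^ 2 /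
          ((((k + 2 : ℕ) : ℝ) ^ 2 - 1 / 4) * (((k + 2 : ℕ) : ℝ) ^ 2 - 9 / 4)) : ℝ) : ℂ) := by
      unfold stmt1Coeff; push_cast; ring
    rw [hx, norm_mul, norm_pow, norm_neg, norm_one, one_pow, one_mul, Complex.norm_real]
    generalize ((k + 2 : ℕ) : ℝ) = x at hk ⊢
    have hx2 : 4 ≤ x ^ 2 := by nlinarith
    have h1 : 0 < x ^ 2 - 1 / 4 := by linarith
    have h9 : 0 < x ^ 2 - 9 / 4 := by linarith
    rw [Real.norm_of_nonneg (by positivity), div_le_one (by positivity)]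
    nlinarith

theorem norm_stmt1Coeff_le (k : ℕ) : ‖stmt1Coeff k‖ ≤ 1 := by
  rcases k with _ | k
  · simp [stmt1Coeff_zero]
  · refine le_trans ?_ (norm_natCast_mul_stmt1Coeff_le (k + 1))
    rw [norm_mul]
    exact le_mul_of_one_le_left (norm_nonneg _) (by rw [Complex.norm_natCast]; simp)

/-- On the open unit disk (away from `-1`), `f` satisfies
`D²f + (1/2)((1-ζ)/(1+ζ)) Df = (3/2) f` where `D = ζ d/dζ`. -/
theorem stmt_1 :
    ∀ ζ : ℂ, ‖ζ‖ < 1 → ζ ≠ -1 →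
      ζ * deriv (fun z => z * deriv stmt1f z) ζ
        + (1 / 2) * ((1 - ζ) / (1 + ζ)) * (ζ * deriv stmt1f ζ)
        = (3 / 2) * stmt1f ζ := by
  intro ζ hζ hζ1
  have h0 : HasSum (fun k => stmt1Coeff k * ζ ^ k) (stmt1f ζ) :=
    (Summable.of_norm_bounded (summable_geometric_of_lt_one (norm_nonneg ζ) hζ) fun k => by
      rw [norm_mul, norm_pow]
      exact mul_le_of_le_one_left (by positivity) (norm_stmt1Coeff_le k)).hasSum
  have h1 : HasSum (fun k => k * stmt1Coeff k * ζ ^ k) (ζ * deriv stmt1f ζ) :=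
    hasSum_mul_deriv_tsum_pow norm_stmt1Coeff_le hζ
  have h2 : HasSum (fun k => k ^ 2 * stmt1Coeff k * ζ ^ k)
      (ζ * deriv (fun z => z * deriv stmt1f z) ζ) :=
    hasSum_mul_deriv_mul_deriv_tsum_pow norm_stmt1Coeff_le norm_natCast_mul_stmt1Coeff_le hζ
  have key := HasSum.mul_eq_neg_of_recurrence (P := fun k => k ^ 2 + k / 2 - 3 / 2)
    (Q := fun k => k ^ 2 - k / 2 - 3 / 2)
    (((h2.add (h1.mul_left (1 / 2))).sub (h0.mul_left (3 / 2))).congr_fun fun k => by ring)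
    (((h2.sub (h1.mul_left (1 / 2))).sub (h0.mul_left (3 / 2))).congr_fun fun k => by ring)
    (by simp [stmt1Coeff_zero]) stmt1Coeff_succ_recurrence
  have hne : 1 + ζ ≠ 0 := fun h => hζ1 (by linear_combination h)
  field_simp
  linear_combination 2 * key
end

section
/- For all real ζ with 0 < ζ < 1, (15/16) ∑_{k≥1} k/((k²-1/4)(k²-9/4)) · (-ζ)^k = (15/32)(1+ζ)²(ζ^{-1} - (1-ζ)·ζ^{-3/2}·arctan(ζ^{1/2})) - 5/8. -/
/-!
With `ζ = s²`, partial fractions give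
`k / ((k² - 1/4)(k² - 9/4)) = (1/(2k-3) - 1/(2k-1) - 1/(2k+1) + 1/(2k+3)) / 2`.
Gregory's series says `∑ (-s²)ᵏ / (2k+1) = arctan s / s`, and shifting the index by one
relates `∑ (-s²)ᵏ / (2k+m)` to `∑ (-s²)ᵏ / (2k+m+2)`, so all four series are elementary
expressions in `s` and `arctan s`.
-/

open Real

theorem hasSum_pow_div_two_mul_add_iff {x a m : ℝ} (hx : x ≠ 0) :
    HasSum (fun k : ℕ => x ^ k / (2 * k + (m + 2))) a ↔
      HasSum (fun k : ℕ => x ^ k / (2 * k + m)) (1 / m + x * a) := by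
  have hshift : (fun k : ℕ => x ^ (k + 1) / (2 * ((k + 1 : ℕ) : ℝ) + m)) =
      fun k : ℕ => x * (x ^ k / (2 * k + (m + 2))) := by
    ext k; push_cast; ring
  rw [← hasSum_nat_add_iff' 1 (f := fun k : ℕ => x ^ k / (2 * k + m)), Finset.sum_range_one,
    hshift, show 1 / m + x * a - x ^ 0 / (2 * ((0 : ℕ) : ℝ) + m) = x * a by simp,
    hasSum_mul_left_iff hx]

theorem hasSum_neg_sq_pow_div_two_mul_add_one {s : ℝ} (hs : s ≠ 0) (hs1 : |s| < 1) :
    HasSum (fun k : ℕ => (-s ^ 2) ^ k / (2 * k + 1)) (arctan s / s) := by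
  refine ((Real.hasSum_arctan (by rwa [Real.norm_eq_abs])).div_const s).congr_fun fun k => ?_
  push_cast
  rw [neg_pow, ← pow_mul, pow_succ]
  field_simp

theorem div_sq_sub_mul_sq_sub_eq {t : ℝ} (h₁ : 2 * t - 1 ≠ 0) (h₁' : 2 * t + 1 ≠ 0)
    (h₃ : 2 * t - 3 ≠ 0) (h₃' : 2 * t + 3 ≠ 0) :
    t / ((t ^ 2 - 1 / 4) * (t ^ 2 - 9 / 4)) =
      (1 / (2 * t - 3) - 1 / (2 * t - 1) - 1 / (2 * t + 1) + 1 / (2 * t + 3)) / 2 := by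
  rw [div_sub_div _ _ h₃ h₁, div_sub_div _ _ (mul_ne_zero h₃ h₁) h₁',
    div_add_div _ _ (by positivity) h₃', div_div, div_eq_div_iff _ (by positivity)]
  · ring
  rw [show (t ^ 2 - 1 / 4) * (t ^ 2 - 9 / 4) =
    (2 * t - 1) * (2 * t + 1) * (2 * t - 3) * (2 * t + 3) / 16 by ring]
  positivity

theorem natCast_div_sq_sub_mul_sq_sub_eq (k : ℕ) :
    (k : ℝ) / (((k : ℝ) ^ 2 - 1 / 4) * ((k : ℝ) ^ 2 - 9 / 4)) =
      (1 / (2 * k - 3) - 1 / (2 * k - 1) - 1 / (2 * k + 1) + 1 / (2 * k + 3)) / 2 := by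
  have hodd (j : ℕ) : (2 * k - (2 * j + 1) : ℝ) ≠ 0 := fun h => by
    have : 2 * k = 2 * j + 1 := by exact_mod_cast (show (2 * k : ℝ) = 2 * j + 1 by linarith)
    omega
  apply div_sq_sub_mul_sq_sub_eq
  · simpa using hodd 0
  · positivity
  · simpa [show (2 : ℝ) + 1 = 3 by norm_num] using hodd 1
  · positivity

theorem hasSum_natCast_div_sq_sub_mul_sq_sub_mul_neg_sq_pow {s : ℝ} (hs : s ≠ 0)
    (hs1 : |s| < 1) :
    HasSum (fun k : ℕ => (k : ℝ) / (((k : ℝ) ^ 2 - 1 / 4) * ((k : ℝ) ^ 2 - 9 / 4)) * (-s ^ 2) ^ k)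
      ((-1 / 3 + s ^ 2 + s ^ 3 * arctan s - (-1 - s * arctan s) - arctan s / s
        + (s - arctan s) / s ^ 3) / 2) := by
  have hx : -s ^ 2 ≠ 0 := by simpa using hs
  have h1 := hasSum_neg_sq_pow_div_two_mul_add_one hs hs1
  have hm1 : HasSum (fun k : ℕ => (-s ^ 2) ^ k / (2 * k + -1)) (-1 - s * arctan s) := by
    convert (hasSum_pow_div_two_mul_add_iff (m := -1) hx).mp (by norm_num; exact h1) using 1
    field_simp; ring
  have hm3 : HasSum (fun k : ℕ => (-s ^ 2) ^ k / (2 * k + -3))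
      (-1 / 3 + s ^ 2 + s ^ 3 * arctan s) := by
    convert (hasSum_pow_div_two_mul_add_iff (m := -3) hx).mp (by norm_num; exact hm1) using 1
    ring
  have h3 : HasSum (fun k : ℕ => (-s ^ 2) ^ k / (2 * k + 3)) ((s - arctan s) / s ^ 3) := by
    convert (hasSum_pow_div_two_mul_add_iff (m := 1) hx).mpr ?_ using 3
    · norm_num
    convert h1 using 1
    field_simp; ring
  refine ((((hm3.sub hm1).sub h1).add h3).div_const 2).congr_fun fun k => ?_
  rw [natCast_div_sq_sub_mul_sq_sub_eq]
  ring

/-- For real `0 < ζ < 1`, the power series equals the closed form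
`(15/32)(1+ζ)²(ζ⁻¹ - (1-ζ)ζ^{-3/2} arctan ζ^{1/2}) - 5/8`. -/
theorem stmt_5 :
    ∀ ζ : ℝ, 0 < ζ → ζ < 1 →
      (15 / 16) * (∑' k : ℕ,
          (k : ℝ) / (((k : ℝ) ^ 2 - 1 / 4) * ((k : ℝ) ^ 2 - 9 / 4)) * (-ζ) ^ k)
        = (15 / 32) * (1 + ζ) ^ 2 *
            (ζ⁻¹ - (1 - ζ) * ζ ^ (-(3 : ℝ) / 2) * Real.arctan (ζ ^ ((1 : ℝ) / 2)))
          - 5 / 8 := by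
  intro ζ hζ hζ1
  obtain ⟨s, hs, rfl⟩ : ∃ s, 0 < s ∧ s ^ 2 = ζ := ⟨√ζ, sqrt_pos.2 hζ, sq_sqrt hζ.le⟩
  have hs1 : s < 1 := by nlinarith
  have hhalf : (s ^ 2) ^ ((1 : ℝ) / 2) = s := by rw [← sqrt_eq_rpow, sqrt_sq hs.le]
  have hneg : (s ^ 2) ^ (-(3 : ℝ) / 2) = (s ^ 3)⁻¹ := by
    rw [← rpow_natCast, ← rpow_mul hs.le, ← rpow_natCast, ← rpow_neg hs.le]
    norm_num
  have hsum := hasSum_natCast_div_sq_sub_mul_sq_sub_mul_neg_sq_pow hs.ne'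
    (by rwa [abs_of_pos hs])
  rw [hsum.tsum_eq, hhalf, hneg]
  field_simp
  ring
end

section
/- Let b > 0 and let F(α,β,γ;z) = ∑_{n≥0} z^n ∏_{j=0}^{n-1} (α+j)(β+j)/((1+j)(γ+j)) with α = -1/2, β = 2b, γ = 2b + 3/2. Then the function g(ζ) = ζ·F(-1/2, 2b, 2b+3/2; -ζ^{1/b}) of real ζ ∈ (0,1) (with ζ^{1/b} the real power) satisfies the differential equation D²g + (1/(2b))·((1 - ζ^{1/b})/(1 + ζ^{1/b}))·Dg = (1 + 1/(2b))·g, where D = ζ·d/dζ. -/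
/-- The coefficients of the Gauss hypergeometric series `F(-1/2, 2b, 2b+3/2; z)`. -/
noncomputable def stmt12c (b : ℝ) (n : ℕ) : ℝ :=
  ∏ j ∈ Finset.range n,
    ((-1 / 2 + (j : ℝ)) * (2 * b + (j : ℝ))) / ((1 + (j : ℝ)) * (2 * b + 3 / 2 + (j : ℝ)))

/-- `g(ζ) = ζ F(-1/2, 2b, 2b+3/2; -ζ^{1/b})` for real `ζ ∈ (0,1)`. -/
noncomputable def stmt12g (b : ℝ) (ζ : ℝ) : ℝ :=
  ζ * ∑' n : ℕ, stmt12c b n * (-(ζ ^ (1 / b))) ^ n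

/-!
For `ζ > 0`, `g(ζ) = ∑ uₙ ζ^λₙ` with `λₙ = 1 + n / b` and `uₙ = (-1)ⁿ cₙ`. The Euler operator
`D = ζ d/dζ` multiplies `ζ^λ` by `λ`, and the `uₙ` are bounded, so on `(0, 1)` the series may be
differentiated termwise: `Dg` and `D²g` have coefficients `uₙ λₙ` and `uₙ λₙ²`. After multiplying
the equation by `1 + ζ^{1/b}`, the coefficient of `ζ^λₙ` is `uₙ P(λₙ) + uₙ₋₁ Q(λₙ₋₁)` with
`P(λ) = λ² + λ/(2b) - 1 - 1/(2b)` and `Q(λ) = λ² - λ/(2b) - 1 - 1/(2b)`. It vanishes by the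
recurrence of the hypergeometric coefficients, and for `n = 0` because `P(1) = 0`.
-/

open Real Set Filter Topology Asymptotics

noncomputable def rpowSeries (b : ℝ) (a : ℕ → ℝ) (z : ℝ) : ℝ :=
  ∑' n : ℕ, a n * z ^ (1 + n / b)

section RpowSeries

variable {a : ℕ → ℝ} {b z : ℝ} {k : ℕ}

lemma rpow_one_add_natCast_div (hz : 0 < z) (b : ℝ) (n : ℕ) :
    z ^ (1 + n / b) = z * (z ^ (1 / b)) ^ n := by
  rw [rpow_add hz, rpow_one, ← rpow_natCast, ← rpow_mul hz.le]
  ring_nf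

lemma isBigO_one_add_div (b : ℝ) :
    (fun n : ℕ => 1 + (n : ℝ) / b) =O[atTop] fun n => (n : ℝ) := by
  refine IsBigO.add ((isBigO_const_left_iff_pos_le_norm one_ne_zero).2 ⟨1, one_pos, ?_⟩)
    (((isBigO_refl _ _).const_mul_left b⁻¹).congr_left fun n => by simp [div_eq_inv_mul])
  filter_upwards [eventually_ge_atTop 1] with n hn
  simpa using hn

lemma Asymptotics.IsBigO.mul_one_add_div (ha : a =O[atTop] fun n => (n : ℝ) ^ k) (b : ℝ) :
    (fun n => a n * (1 + n / b)) =O[atTop] fun n => (n : ℝ) ^ (k + 1) := by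
  simpa only [pow_succ] using ha.mul (isBigO_one_add_div b)

lemma summable_rpowSeries (hb : 0 < b) (ha : a =O[atTop] fun n => (n : ℝ) ^ k)
    (hz0 : 0 < z) (hz1 : z < 1) : Summable fun n => a n * z ^ (1 + n / b) := by
  have hq : ‖z ^ (1 / b)‖ < 1 := by
    rw [norm_of_nonneg (rpow_nonneg hz0.le _)]
    exact rpow_lt_one hz0.le hz1 (by positivity)
  refine summable_of_isBigO_nat ((summable_pow_mul_geometric_of_norm_lt_one k hq).mul_left z) ?_
  simp_rw [rpow_one_add_natCast_div hz0]
  exact (ha.mul (isBigO_refl (fun n => z * (z ^ (1 / b)) ^ n) atTop)).congr_right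
    fun n => by ring

lemma hasSum_rpowSeries (hb : 0 < b) (ha : a =O[atTop] fun n => (n : ℝ) ^ k)
    (hz0 : 0 < z) (hz1 : z < 1) : HasSum (fun n => a n * z ^ (1 + n / b)) (rpowSeries b a z) :=
  (summable_rpowSeries hb ha hz0 hz1).hasSum

lemma hasDerivAt_rpowSeries (hb : 0 < b) (ha : a =O[atTop] fun n => (n : ℝ) ^ k)
    (hz0 : 0 < z) (hz1 : z < 1) :
    HasDerivAt (rpowSeries b a) (∑' n, a n * (1 + n / b) * z ^ (n / b)) z := by
  obtain ⟨r, hzr, hr1⟩ := exists_between hz1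
  have hr0 : 0 < r := hz0.trans hzr
  have hq : ‖r ^ (1 / b)‖ < 1 := by
    rw [norm_of_nonneg (rpow_nonneg hr0.le _)]
    exact rpow_lt_one hr0.le hr1 (by positivity)
  have hbound : Summable fun n => ‖a n * (1 + n / b)‖ * (r ^ (1 / b)) ^ n :=
    summable_of_isBigO_nat (summable_pow_mul_geometric_of_norm_lt_one (k + 1) hq)
      ((ha.mul_one_add_div b).norm_left.mul (isBigO_refl _ _))
  refine hasDerivAt_tsum_of_isPreconnected (g := fun n y => a n * y ^ (1 + n / b))
    (g' := fun n y => a n * (1 + n / b) * y ^ (n / b)) hbound isOpen_Ioo isPreconnected_Ioo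
    (fun n y hy => ?_) (fun n y hy => ?_) (show z ∈ Ioo 0 r from ⟨hz0, hzr⟩)
    (summable_rpowSeries hb ha hz0 hz1) ⟨hz0, hzr⟩
  · refine ((hasDerivAt_rpow_const (p := 1 + n / b) (Or.inl hy.1.ne')).const_mul (a n))
      |>.congr_deriv ?_
    rw [add_sub_cancel_left, mul_assoc]
  · have hy' : y ^ ((n : ℝ) / b) ≤ (r ^ (1 / b)) ^ n := by
      rw [← rpow_natCast, ← rpow_mul hr0.le, one_div_mul_eq_div]
      exact rpow_le_rpow hy.1.le hy.2.le (by positivity)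
    rw [norm_mul, norm_of_nonneg (rpow_nonneg hy.1.le _)]
    gcongr

lemma mul_deriv_rpowSeries (hb : 0 < b) (ha : a =O[atTop] fun n => (n : ℝ) ^ k)
    (hz0 : 0 < z) (hz1 : z < 1) :
    z * deriv (rpowSeries b a) z = rpowSeries b (fun n => a n * (1 + n / b)) z := by
  rw [(hasDerivAt_rpowSeries hb ha hz0 hz1).deriv, rpowSeries, ← tsum_mul_left]
  congr 1 with n
  rw [rpow_add hz0, rpow_one]
  ring

lemma mul_deriv_mul_deriv_rpowSeries (hb : 0 < b) (ha : a =O[atTop] fun n => (n : ℝ) ^ k)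
    (hz0 : 0 < z) (hz1 : z < 1) :
    z * deriv (fun w => w * deriv (rpowSeries b a) w) z =
      rpowSeries b (fun n => a n * (1 + n / b) ^ 2) z := by
  have h : (fun w => w * deriv (rpowSeries b a) w) =ᶠ[𝓝 z]
      rpowSeries b (fun n => a n * (1 + n / b)) := by
    filter_upwards [Ioo_mem_nhds hz0 hz1] with w hw
    exact mul_deriv_rpowSeries hb ha hw.1 hw.2
  rw [h.deriv_eq, mul_deriv_rpowSeries hb (ha.mul_one_add_div b) hz0 hz1]
  simp only [pow_two, mul_assoc]

lemma HasSum.add_rpow_mul_eq_zero_of_succ {v w : ℕ → ℝ} {s t : ℝ} (hz : 0 < z)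
    (hv : HasSum (fun n => v n * z ^ (1 + n / b)) s)
    (hw : HasSum (fun n => w n * z ^ (1 + n / b)) t)
    (hv0 : v 0 = 0) (hvw : ∀ n, v (n + 1) = -w n) : s + z ^ (1 / b) * t = 0 := by
  have hs : HasSum (fun n => v (n + 1) * z ^ (1 + ((n + 1 : ℕ) : ℝ) / b)) s := by
    simpa [hv0] using (hasSum_nat_add_iff' 1).mpr hv
  have hshift : (fun n => v (n + 1) * z ^ (1 + ((n + 1 : ℕ) : ℝ) / b)) =
      fun n => -(z ^ (1 / b) * (w n * z ^ (1 + n / b))) := by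
    ext n
    rw [hvw, mul_left_comm, ← rpow_add hz]
    push_cast
    ring_nf
  rw [hshift] at hs
  linarith [hs.unique (hw.mul_left (z ^ (1 / b))).neg]

end RpowSeries

section Hypergeometric

variable {b z : ℝ}

lemma abs_stmt12c_le_one (hb : 0 ≤ b) (n : ℕ) : |stmt12c b n| ≤ 1 := by
  rw [stmt12c, Finset.abs_prod]
  refine Finset.prod_le_one (fun _ _ => abs_nonneg _) fun j _ => ?_
  have hj : (0 : ℝ) ≤ j := j.cast_nonneg
  rw [abs_div, div_le_one (by positivity), abs_mul, abs_mul,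
    abs_of_pos (by positivity : (0 : ℝ) < 1 + j), abs_of_pos (by positivity : 0 < 2 * b + 3 / 2 + j),
    abs_of_nonneg (by positivity : 0 ≤ 2 * b + j)]
  gcongr
  · rw [abs_le]; constructor <;> linarith
  · linarith

lemma stmt12c_succ (b : ℝ) (n : ℕ) : stmt12c b (n + 1) =
    stmt12c b n * ((-1 / 2 + n) * (2 * b + n) / ((1 + n) * (2 * b + 3 / 2 + n))) :=
  Finset.prod_range_succ _ _

noncomputable def gCoeff (b : ℝ) (n : ℕ) : ℝ := (-1) ^ n * stmt12c b n

lemma gCoeff_isBigO (hb : 0 ≤ b) : gCoeff b =O[atTop] fun n => (n : ℝ) ^ 0 :=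
  IsBigO.of_bound 1 (Eventually.of_forall fun n => by
    simpa [gCoeff] using abs_stmt12c_le_one hb n)

lemma stmt12g_eventuallyEq_rpowSeries (hz : 0 < z) :
    stmt12g b =ᶠ[𝓝 z] rpowSeries b (gCoeff b) := by
  filter_upwards [Ioi_mem_nhds hz] with w hw
  rw [stmt12g, rpowSeries, ← tsum_mul_left]
  congr 1 with n
  rw [gCoeff, rpow_one_add_natCast_div hw, neg_pow]
  ring

/- With `λ = 1 + n / b`, the two quadratics factor as
`λ² + λ/(2b) - 1 - 1/(2b) = (n + 1)(2n + 4b + 3) / (2b²)` at `λ = 1 + (n + 1)/b` and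
`λ² - λ/(2b) - 1 - 1/(2b) = (n + 2b)(2n - 1) / (2b²)`, whose ratio is the ratio of consecutive
hypergeometric coefficients. -/
lemma gCoeff_succ_mul (hb : 0 < b) (n : ℕ) :
    gCoeff b (n + 1) * ((1 + (n + 1 : ℕ) / b) ^ 2 + (1 + (n + 1 : ℕ) / b) / (2 * b)
      - (1 + 1 / (2 * b))) =
      -(gCoeff b n * ((1 + n / b) ^ 2 - (1 + n / b) / (2 * b) - (1 + 1 / (2 * b)))) := by
  rw [gCoeff, gCoeff, stmt12c_succ, pow_succ]
  have h1 : (1 : ℝ) + n ≠ 0 := by positivity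
  have h2 : 2 * b + 3 / 2 + (n : ℝ) ≠ 0 := by positivity
  push_cast
  field_simp
  ring

lemma gCoeff_series_identity (hb : 0 < b) (hz0 : 0 < z) (hz1 : z < 1) :
    (rpowSeries b (fun n => gCoeff b n * (1 + n / b) ^ 2) z
        + 1 / (2 * b) * rpowSeries b (fun n => gCoeff b n * (1 + n / b)) z
        - (1 + 1 / (2 * b)) * rpowSeries b (gCoeff b) z)
      + z ^ (1 / b) * (rpowSeries b (fun n => gCoeff b n * (1 + n / b) ^ 2) z
        - 1 / (2 * b) * rpowSeries b (fun n => gCoeff b n * (1 + n / b)) z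
        - (1 + 1 / (2 * b)) * rpowSeries b (gCoeff b) z) = 0 := by
  have hu := gCoeff_isBigO hb.le
  have hA := hasSum_rpowSeries hb (((hu.mul_one_add_div b).mul_one_add_div b).congr_left
    fun n => (mul_assoc _ _ _).trans (congrArg _ (sq _).symm)) hz0 hz1
  have hB := hasSum_rpowSeries hb (hu.mul_one_add_div b) hz0 hz1
  have hC := hasSum_rpowSeries hb hu hz0 hz1
  refine HasSum.add_rpow_mul_eq_zero_of_succ hz0
    (v := fun n => gCoeff b n * ((1 + n / b) ^ 2 + (1 + n / b) / (2 * b) - (1 + 1 / (2 * b))))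
    (w := fun n => gCoeff b n * ((1 + n / b) ^ 2 - (1 + n / b) / (2 * b) - (1 + 1 / (2 * b))))
    ?_ ?_ ?_ (gCoeff_succ_mul hb)
  · exact ((hA.add (hB.mul_left _)).sub (hC.mul_left _)).congr_fun fun n => by ring
  · exact ((hA.sub (hB.mul_left _)).sub (hC.mul_left _)).congr_fun fun n => by ring
  · simp [gCoeff, stmt12c]

end Hypergeometric

/-- `g` satisfies `D²g + (1/(2b))((1-ζ^{1/b})/(1+ζ^{1/b})) Dg = (1 + 1/(2b)) g` on `(0,1)`,
where `D = ζ d/dζ`. -/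
theorem stmt_12 (b : ℝ) (hb : 0 < b) :
    ∀ ζ : ℝ, 0 < ζ → ζ < 1 →
      ζ * deriv (fun z : ℝ => z * deriv (stmt12g b) z) ζ
        + (1 / (2 * b)) * ((1 - ζ ^ (1 / b)) / (1 + ζ ^ (1 / b)))
            * (ζ * deriv (stmt12g b) ζ)
        = (1 + 1 / (2 * b)) * stmt12g b ζ := by
  intro ζ h0 h1
  have hDg : (fun z => z * deriv (stmt12g b) z) =ᶠ[𝓝 ζ]
      fun z => z * deriv (rpowSeries b (gCoeff b)) z := by
    filter_upwards [Ioi_mem_nhds h0] with z hz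
    rw [(stmt12g_eventuallyEq_rpowSeries hz).deriv_eq]
  have hg := stmt12g_eventuallyEq_rpowSeries (b := b) h0
  have hu := gCoeff_isBigO hb.le
  rw [hDg.deriv_eq, hg.deriv_eq, hg.eq_of_nhds,
    mul_deriv_mul_deriv_rpowSeries hb hu h0 h1, mul_deriv_rpowSeries hb hu h0 h1]
  have key := gCoeff_series_identity hb h0 h1
  have hx : 1 + ζ ^ (1 / b) ≠ 0 := by positivity
  rw [← sub_eq_zero, ← mul_right_inj' hx, mul_zero, ← key]
  field_simp
  ring
end
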